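/- With the map φ as above, the gradient of s₂ with respect to x equals -(τ/(1 - ε κ s₃ R cos s₂)) T - (sin s₂/(ε s₃ R)) N + (cos s₂/(ε s₃ R)) B, and the gradient of s₃ equals -(s₃ ∂R/∂s₁ /(R(1 - ε κ s₃ R cos s₂))) T + (cos s₂/(ε R)) N + (sin s₂/(ε R)) B. -/

import Mathlib

open scoped RealInnerProductSpace

/-! Differentiating `φ` with the Frenet–Serret formulas expresses each `∂φ/∂sⱼ` in the
orthonormal frame `(T, N, B)`, where inner products are dot products of coordinates. In these
coordinates the six identities are rational identities in `sin s₂, cos s₂`, closed by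
`sin² s₂ + cos² s₂ = 1`. -/

theorem inner_frame_combination {E : Type*} [NormedAddCommGroup E] [InnerProductSpace ℝ E]
    {T N B : E} (hTT : ⟪T, T⟫ = 1) (hNN : ⟪N, N⟫ = 1) (hBB : ⟪B, B⟫ = 1)
    (hTN : ⟪T, N⟫ = 0) (hTB : ⟪T, B⟫ = 0) (hNB : ⟪N, B⟫ = 0) (a b c a' b' c' : ℝ) :
    ⟪a • T + b • N + c • B, a' • T + b' • N + c' • B⟫ = a * a' + b * b' + c * c' := by
  have hNT : ⟪N, T⟫ = 0 := by rwa [real_inner_comm]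
  have hBT : ⟪B, T⟫ = 0 := by rwa [real_inner_comm]
  have hBN : ⟪B, N⟫ = 0 := by rwa [real_inner_comm]
  simp only [inner_add_left, inner_add_right, real_inner_smul_left, real_inner_smul_right,
    hTT, hNN, hBB, hTN, hTB, hNB, hNT, hBT, hBN]
  ring

section TubeDerivatives

variable {E : Type*} [NormedAddCommGroup E] [NormedSpace ℝ E]

theorem hasDerivAt_tube_along_curve {c T N B : ℝ → E} {κ τ ρ : ℝ → ℝ} {ρ' ε r θ s₀ : ℝ}
    (hc : HasDerivAt c (T s₀) s₀) (hN : HasDerivAt N ((-κ s₀) • T s₀ + τ s₀ • B s₀) s₀)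
    (hB : HasDerivAt B ((-τ s₀) • N s₀) s₀) (hρ : HasDerivAt ρ ρ' s₀) :
    HasDerivAt (fun s => c s + (ε * r * ρ s) • (Real.cos θ • N s + Real.sin θ • B s))
      ((1 - ε * κ s₀ * r * ρ s₀ * Real.cos θ) • T s₀
        + (ε * r * (ρ' * Real.cos θ - ρ s₀ * τ s₀ * Real.sin θ)) • N s₀
        + (ε * r * (ρ' * Real.sin θ + ρ s₀ * τ s₀ * Real.cos θ)) • B s₀) s₀ := by
  have hnormal : HasDerivAt (fun s => Real.cos θ • N s + Real.sin θ • B s)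
      (Real.cos θ • ((-κ s₀) • T s₀ + τ s₀ • B s₀) + Real.sin θ • ((-τ s₀) • N s₀)) s₀ :=
    (hN.const_smul _).add (hB.const_smul _)
  exact (hc.add ((hρ.const_mul (ε * r)).smul hnormal)).congr_deriv (by module)

theorem hasDerivAt_tube_angle (p N B : E) (ε r ρ θ : ℝ) :
    HasDerivAt (fun φ => p + (ε * r * ρ) • (Real.cos φ • N + Real.sin φ • B))
      ((-(ε * r * ρ * Real.sin θ)) • N + (ε * r * ρ * Real.cos θ) • B) θ :=
  ((((Real.hasDerivAt_cos θ).smul_const N).add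
    ((Real.hasDerivAt_sin θ).smul_const B)).const_smul (ε * r * ρ) |>.const_add p).congr_deriv
    (by module)

theorem hasDerivAt_tube_radius (p N B : E) (ε r ρ θ : ℝ) :
    HasDerivAt (fun r' => p + (ε * r' * ρ) • (Real.cos θ • N + Real.sin θ • B))
      ((ε * ρ * Real.cos θ) • N + (ε * ρ * Real.sin θ) • B) r :=
  ((((hasDerivAt_id r).const_mul ε).mul_const ρ).smul_const
    (Real.cos θ • N + Real.sin θ • B)).const_add p |>.congr_deriv (by module)

end TubeDerivatives

theorem stmt_3_general
    (c T N B : ℝ → EuclideanSpace ℝ (Fin 3)) (κ τ : ℝ → ℝ)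
    (R : ℝ → ℝ → ℝ) (Rs : ℝ → ℝ) (ε t s₁ s₂ s₃ : ℝ)
    (hc : ∀ s, HasDerivAt c (T s) s)
    (hN : ∀ s, HasDerivAt N ((-κ s) • T s + τ s • B s) s)
    (hB : ∀ s, HasDerivAt B ((-τ s) • N s) s)
    (hTT : ∀ s, ⟪T s, T s⟫ = 1) (hNN : ∀ s, ⟪N s, N s⟫ = 1)
    (hBB : ∀ s, ⟪B s, B s⟫ = 1) (hTN : ∀ s, ⟪T s, N s⟫ = 0)
    (hTB : ∀ s, ⟪T s, B s⟫ = 0) (hNB : ∀ s, ⟪N s, B s⟫ = 0)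
    (hRpos : ∀ s, 0 < R t s)
    (hR : ∀ s, HasDerivAt (fun s' => R t s') (Rs s) s)
    (D : Fin 3 → EuclideanSpace ℝ (Fin 3))
    (hD1 : HasDerivAt
      (fun s => c s + (ε * s₃ * R t s) • ((Real.cos s₂) • N s + (Real.sin s₂) • B s))
      (D 0) s₁)
    (hD2 : HasDerivAt
      (fun θ => c s₁ + (ε * s₃ * R t s₁) • ((Real.cos θ) • N s₁ + (Real.sin θ) • B s₁))
      (D 1) s₂)
    (hD3 : HasDerivAt
      (fun r => c s₁ + (ε * r * R t s₁) • ((Real.cos s₂) • N s₁ + (Real.sin s₂) • B s₁))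
      (D 2) s₃)
    (hs₃ : 0 < s₃) (hε : ε ≠ 0)
    (hA : 1 - ε * κ s₁ * s₃ * R t s₁ * Real.cos s₂ ≠ 0)
    (G₂ G₃ : EuclideanSpace ℝ (Fin 3))
    (hG₂ : G₂ = (-(τ s₁) / (1 - ε * κ s₁ * s₃ * R t s₁ * Real.cos s₂)) • T s₁
        + (-(Real.sin s₂) / (ε * s₃ * R t s₁)) • N s₁
        + (Real.cos s₂ / (ε * s₃ * R t s₁)) • B s₁)
    (hG₃ : G₃ = (-(s₃ * Rs s₁) / (R t s₁ * (1 - ε * κ s₁ * s₃ * R t s₁ * Real.cos s₂))) • T s₁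
        + (Real.cos s₂ / (ε * R t s₁)) • N s₁
        + (Real.sin s₂ / (ε * R t s₁)) • B s₁) :
    (⟪G₂, D 0⟫ = 0 ∧ ⟪G₂, D 1⟫ = 1 ∧ ⟪G₂, D 2⟫ = 0) ∧
    (⟪G₃, D 0⟫ = 0 ∧ ⟪G₃, D 1⟫ = 0 ∧ ⟪G₃, D 2⟫ = 1) := by
  have eq_D0 := hD1.unique (hasDerivAt_tube_along_curve (hc s₁) (hN s₁) (hB s₁) (hR s₁))
  have eq_D1 : D 1 = (0 : ℝ) • T s₁ + (-(ε * s₃ * R t s₁ * Real.sin s₂)) • N s₁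
      + (ε * s₃ * R t s₁ * Real.cos s₂) • B s₁ := by
    rw [zero_smul, zero_add]
    exact hD2.unique (hasDerivAt_tube_angle (c s₁) (N s₁) (B s₁) ε s₃ (R t s₁) s₂)
  have eq_D2 : D 2 = (0 : ℝ) • T s₁ + (ε * R t s₁ * Real.cos s₂) • N s₁
      + (ε * R t s₁ * Real.sin s₂) • B s₁ := by
    rw [zero_smul, zero_add]
    exact hD3.unique (hasDerivAt_tube_radius (c s₁) (N s₁) (B s₁) ε s₃ (R t s₁) s₂)
  have hR₀ : R t s₁ ≠ 0 := (hRpos s₁).ne'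
  have hs₃₀ : s₃ ≠ 0 := hs₃.ne'
  have hpyth := Real.sin_sq_add_cos_sq s₂
  -- keeping `A` atomic lets `field_simp` cancel it using `hA`
  set A := 1 - ε * κ s₁ * s₃ * R t s₁ * Real.cos s₂
  simp only [hG₂, hG₃, eq_D0, eq_D1, eq_D2, mul_zero,
    inner_frame_combination (hTT s₁) (hNN s₁) (hBB s₁) (hTN s₁) (hTB s₁) (hNB s₁)]
  refine ⟨⟨?_, ?_, ?_⟩, ⟨?_, ?_, ?_⟩⟩ <;> field_simp
  · linear_combination (τ s₁ * R t s₁) * hpyth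
  · linear_combination hpyth
  · ring
  · linear_combination (s₃ * Rs s₁) * hpyth
  · ring
  · linear_combination hpyth

/-- The gradients of the coordinates `s₂` and `s₃` of the inverse of `φ` are
`G₂ = -(τ/(1-εκs₃R cos s₂)) T - (sin s₂/(ε s₃ R)) N + (cos s₂/(ε s₃ R)) B` and
`G₃ = -(s₃ ∂R/∂s₁/(R(1-εκs₃R cos s₂))) T + (cos s₂/(ε R)) N + (sin s₂/(ε R)) B`,
characterized as the corresponding rows of the inverse Jacobian `(∇ₛφ)⁻¹`
via `⟪G_q, ∂φ/∂s_j⟫ = δ_{qj}`. -/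
theorem stmt_3
    (c T N B : ℝ → EuclideanSpace ℝ (Fin 3)) (κ τ : ℝ → ℝ)
    (R : ℝ → ℝ → ℝ) (Rs : ℝ → ℝ) (ε t s₁ s₂ s₃ : ℝ)
    (hc : ∀ s, HasDerivAt c (T s) s)
    (hT : ∀ s, HasDerivAt T (κ s • N s) s)
    (hN : ∀ s, HasDerivAt N ((-κ s) • T s + τ s • B s) s)
    (hB : ∀ s, HasDerivAt B ((-τ s) • N s) s)
    (hTT : ∀ s, ⟪T s, T s⟫ = 1) (hNN : ∀ s, ⟪N s, N s⟫ = 1)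
    (hBB : ∀ s, ⟪B s, B s⟫ = 1) (hTN : ∀ s, ⟪T s, N s⟫ = 0)
    (hTB : ∀ s, ⟪T s, B s⟫ = 0) (hNB : ∀ s, ⟪N s, B s⟫ = 0)
    (hRpos : ∀ s, 0 < R t s)
    (hR : ∀ s, HasDerivAt (fun s' => R t s') (Rs s) s)
    (D : Fin 3 → EuclideanSpace ℝ (Fin 3))
    (hD1 : HasDerivAt
      (fun s => c s + (ε * s₃ * R t s) • ((Real.cos s₂) • N s + (Real.sin s₂) • B s))
      (D 0) s₁)
    (hD2 : HasDerivAt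
      (fun θ => c s₁ + (ε * s₃ * R t s₁) • ((Real.cos θ) • N s₁ + (Real.sin θ) • B s₁))
      (D 1) s₂)
    (hD3 : HasDerivAt
      (fun r => c s₁ + (ε * r * R t s₁) • ((Real.cos s₂) • N s₁ + (Real.sin s₂) • B s₁))
      (D 2) s₃)
    (hs₃ : 0 < s₃) (hs₃' : s₃ ≤ 1) (hε : ε ≠ 0)
    (hA : 1 - ε * κ s₁ * s₃ * R t s₁ * Real.cos s₂ ≠ 0)
    (G₂ G₃ : EuclideanSpace ℝ (Fin 3))
    (hG₂ : G₂ = (-(τ s₁) / (1 - ε * κ s₁ * s₃ * R t s₁ * Real.cos s₂)) • T s₁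
        + (-(Real.sin s₂) / (ε * s₃ * R t s₁)) • N s₁
        + (Real.cos s₂ / (ε * s₃ * R t s₁)) • B s₁)
    (hG₃ : G₃ = (-(s₃ * Rs s₁) / (R t s₁ * (1 - ε * κ s₁ * s₃ * R t s₁ * Real.cos s₂))) • T s₁
        + (Real.cos s₂ / (ε * R t s₁)) • N s₁
        + (Real.sin s₂ / (ε * R t s₁)) • B s₁) :
    (⟪G₂, D 0⟫ = 0 ∧ ⟪G₂, D 1⟫ = 1 ∧ ⟪G₂, D 2⟫ = 0) ∧
    (⟪G₃, D 0⟫ = 0 ∧ ⟪G₃, D 1⟫ = 0 ∧ ⟪G₃, D 2⟫ = 1) :=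
  stmt_3_general c T N B κ τ R Rs ε t s₁ s₂ s₃ hc hN hB hTT hNN hBB hTN hTB hNB hRpos hR D hD1 hD2
    hD3 hs₃ hε hA G₂ G₃ hG₂ hG₃
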